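/- For each n ≥ 4, the number of acyclic orientations of the loopless Schreier graph B_n* of the Basilica group is: for n odd, (2^{2^{(n−1)/2}} − 2)^4 (2^{2^{(n+1)/2}} − 2) · Π_{i=1}^{(n−1)/2 − 1} (2^{2^i} − 2)^{3·2^{n−2i−1}}; for n even, (2^{2^{n/2}} − 2)^3 · Π_{i=1}^{n/2 − 1} (2^{2^i} − 2)^{3·2^{n−2i−1}}. Moreover, the counts for n = 1, 2, 3 are 2, 2^3, and 2^5·7, respectively. -/

import Mathlib

/-!
`B_n*` is a cactus: its cycles are the nontrivial orbits of the generators `a` and `b` on the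
words of length `n`, and they can be listed so that each one meets the later ones in at most one
vertex. An orientation of such a graph is acyclic exactly when no cycle is oriented coherently
(a height function built on each cycle glues along the tree structure), so a cycle of length `m`
contributes a factor `2^m - 2`. The orbit lengths follow the self-similar recursion of the
generators: on level `n + 1` the `a`-orbits are the fixed points `1w` and the `b`-orbits of level
`n` prefixed by `0`, while the `b`-orbits are the `a`-orbits of level `n` under both prefixes,
of twice the length. Two steps of the recursion double every length and add `2^(n+1)` fixed
points and `2^n` cycles of length `2`, which yields the closed formulas.
-/

/-- A finite multigraph on a vertex set `V`: a finite edge type together with an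
incidence map assigning to each edge its unordered pair of endpoints
(loops and parallel edges are allowed). -/
structure Multigraph (V : Type) where
  /-- the type of edges -/
  Edge : Type
  /-- the edge type is finite -/
  fintypeEdge : Fintype Edge
  /-- equality of edges is decidable -/
  decEqEdge : DecidableEq Edge
  /-- the unordered pair of endpoints of an edge -/
  inc : Edge → Sym2 V

attribute [instance] Multigraph.fintypeEdge Multigraph.decEqEdge

namespace Multigraph

variable {V : Type} [Fintype V] [DecidableEq V]

/-- The simple graph underlying the spanning subgraph of `G` with edge set `A`:
two distinct vertices are adjacent iff some edge in `A` has them as endpoints. -/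
def toSimple (G : Multigraph V) (A : Finset G.Edge) : SimpleGraph V :=
  SimpleGraph.fromRel fun u v => ∃ e ∈ A, G.inc e = s(u, v)

/-- `G.comps A` is the number `k(A)` of connected components of the spanning
subgraph of `G` with edge set `A`. -/
noncomputable def comps (G : Multigraph V) (A : Finset G.Edge) : ℕ :=
  Nat.card (G.toSimple A).ConnectedComponent

/-- The rank `r(A) = |V| - k(A)` of the spanning subgraph with edge set `A`. -/
noncomputable def rk (G : Multigraph V) (A : Finset G.Edge) : ℕ :=
  Fintype.card V - G.comps A

/-- The nullity `n(A) = |E(A)| - r(A)` of the spanning subgraph with edge set `A`. -/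
noncomputable def nullity (G : Multigraph V) (A : Finset G.Edge) : ℕ :=
  A.card - G.rk A

/-- The Tutte polynomial
`T(G; x, y) = ∑_{A ⊆ E} (x - 1) ^ (r(E) - r(A)) * (y - 1) ^ n(A)`,
as a function of two real variables. -/
noncomputable def tutte (G : Multigraph V) (x y : ℝ) : ℝ :=
  ∑ A ∈ (Finset.univ : Finset G.Edge).powerset,
    (x - 1) ^ (G.rk Finset.univ - G.rk A) * (y - 1) ^ (G.nullity A)

/-- The reliability polynomial `R(G, p)`: the probability that, when each edge is
independently active with probability `p`, every pair of vertices is joined by a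
path of active edges (i.e. the spanning subgraph of active edges is connected). -/
noncomputable def reliability (G : Multigraph V) (p : ℝ) : ℝ :=
  ∑ A ∈ (Finset.univ : Finset G.Edge).powerset,
    if G.comps A = 1 then p ^ A.card * (1 - p) ^ (Fintype.card G.Edge - A.card) else 0

/-- The complexity `τ(G)`: the number of spanning subtrees of `G`, i.e. spanning
subgraphs which are connected and have `|V| - 1` edges. -/
noncomputable def treeCount (G : Multigraph V) : ℕ :=
  Nat.card {A : Finset G.Edge // G.comps A = 1 ∧ A.card + 1 = Fintype.card V}

/-- The number of connected spanning subgraphs of `G`. -/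
noncomputable def connCount (G : Multigraph V) : ℕ :=
  Nat.card {A : Finset G.Edge // G.comps A = 1}

/-- The number of spanning forests of `G`: spanning subgraphs containing no cycle,
i.e. with `|E(A)| = |V| - k(A)` (zero nullity). -/
noncomputable def forestCount (G : Multigraph V) : ℕ :=
  Nat.card {A : Finset G.Edge // A.card + G.comps A = Fintype.card V}

/-- `σ` is an orientation of `G` if it assigns to every edge an ordered pair of
vertices whose underlying unordered pair is the pair of endpoints of the edge. -/
def IsOrientation (G : Multigraph V) (σ : G.Edge → V × V) : Prop :=
  ∀ e, s((σ e).1, (σ e).2) = G.inc e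

/-- The number of acyclic orientations of `G`: orientations admitting no directed
cycle. -/
noncomputable def acyclicOrientationCount (G : Multigraph V) : ℕ :=
  Nat.card {σ : G.Edge → V × V //
    G.IsOrientation σ ∧ ∀ v : V, ¬ Relation.TransGen (fun u w => ∃ e, σ e = (u, w)) v v}

/-- A proper coloring of `G`: the two endpoints of every edge receive distinct
colors. -/
def ProperColoring (G : Multigraph V) {α : Type} (c : V → α) : Prop :=
  ∀ e, ¬ (Sym2.map c (G.inc e)).IsDiag

/-- The number of proper colorings of `G` with `k` colors (the value `χ(G, k)` of
the chromatic polynomial at the natural number `k`). -/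
noncomputable def chromCount (G : Multigraph V) (k : ℕ) : ℕ :=
  Nat.card {c : V → Fin k // G.ProperColoring c}

end Multigraph

mutual
  /-- The generator `a = e(b, id)` of the Basilica group, acting on the `n`-th
  level of the binary rooted tree: `a(1w) = 1w` and `a(0w) = 0 b(w)`. -/
  def basA : (n : ℕ) → (Fin n → Bool) → (Fin n → Bool)
    | 0, v => v
    | n + 1, v =>
      match v 0 with
      | true => v
      | false => Fin.cons false (basB n (Fin.tail v))

  /-- The generator `b = ε(a, id)` of the Basilica group, acting on the `n`-th
  level of the binary rooted tree: `b(1w) = 0w` and `b(0w) = 1 a(w)`. -/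
  def basB : (n : ℕ) → (Fin n → Bool) → (Fin n → Bool)
    | 0, v => v
    | n + 1, v =>
      match v 0 with
      | true => Fin.cons false (Fin.tail v)
      | false => Fin.cons true (basA n (Fin.tail v))
end

/-- The generator of the Basilica group indexed by a boolean tag. -/
def basGen (n : ℕ) : Bool → (Fin n → Bool) → (Fin n → Bool)
  | true => basA n
  | false => basB n

/-- The level-`n` Schreier graph `B_n` of the Basilica group: vertices are the
binary words of length `n`, and for each generator `s ∈ {a, b}` and each vertex
`v` there is one edge joining `v` and `s(v)` (a loop when `s(v) = v`). -/
def basilica (n : ℕ) : Multigraph (Fin n → Bool) where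
  Edge := Bool × (Fin n → Bool)
  fintypeEdge := inferInstance
  decEqEdge := inferInstance
  inc := fun e => s(e.2, basGen n e.1 e.2)

/-- The loopless level-`n` Schreier graph `B_n*` of the Basilica group: `B_n`
with all loops deleted. -/
def basilicaStar (n : ℕ) : Multigraph (Fin n → Bool) where
  Edge := { e : Bool × (Fin n → Bool) // basGen n e.1 e.2 ≠ e.2 }
  fintypeEdge := inferInstance
  decEqEdge := inferInstance
  inc := fun e => s(e.1.2, basGen n e.1.1 e.1.2)

open Function Finset

section Orbit

variable {V : Type*} [DecidableEq V] {f : V → V} {v w : V}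

noncomputable def orbitFinset (f : V → V) (v : V) : Finset V :=
  (range (minimalPeriod f v)).image (f^[·] v)

theorem mem_orbitFinset [Finite V] (hf : Injective f) :
    w ∈ orbitFinset f v ↔ ∃ k, f^[k] v = w := by
  simp only [orbitFinset, mem_image, mem_range]
  refine ⟨fun ⟨k, _, hk⟩ => ⟨k, hk⟩, ?_⟩
  rintro ⟨k, rfl⟩
  exact ⟨k % minimalPeriod f v,
    Nat.mod_lt _ (minimalPeriod_pos_of_mem_periodicPts (hf.mem_periodicPts v)),
    iterate_mod_minimalPeriod_eq⟩

theorem iterate_mem_orbitFinset [Finite V] (hf : Injective f) (v : V) (k : ℕ) :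
    f^[k] v ∈ orbitFinset f v :=
  (mem_orbitFinset hf).2 ⟨k, rfl⟩

theorem mem_orbitFinset_self [Finite V] (hf : Injective f) (v : V) : v ∈ orbitFinset f v :=
  iterate_mem_orbitFinset hf v 0

theorem apply_mem_orbitFinset [Finite V] (hf : Injective f) (h : w ∈ orbitFinset f v) :
    f w ∈ orbitFinset f v := by
  obtain ⟨k, rfl⟩ := (mem_orbitFinset hf).1 h
  simpa only [iterate_succ_apply'] using iterate_mem_orbitFinset hf v (k + 1)

theorem orbitFinset_subset {S : Finset V} (hv : v ∈ S) (hS : ∀ u ∈ S, f u ∈ S) :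
    orbitFinset f v ⊆ S := by
  intro w hw
  obtain ⟨k, -, rfl⟩ := mem_image.1 hw
  clear hw
  induction k with
  | zero => exact hv
  | succ k ih => rw [iterate_succ_apply']; exact hS _ ih

theorem orbitFinset_eq_of_mem [Finite V] (hf : Injective f) (h : w ∈ orbitFinset f v) :
    orbitFinset f w = orbitFinset f v := by
  obtain ⟨k, rfl⟩ := (mem_orbitFinset hf).1 h
  have hpos := minimalPeriod_pos_of_mem_periodicPts (hf.mem_periodicPts v)
  have hv := iterate_mem_orbitFinset hf (f^[k] v) (k * (minimalPeriod f v - 1))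
  rw [← iterate_add_apply, Nat.mul_sub_one, Nat.sub_add_cancel (Nat.le_mul_of_pos_right k hpos),
    mul_comm, iterate_mul, iterate_fixed iterate_minimalPeriod] at hv
  exact (orbitFinset_subset h fun u => apply_mem_orbitFinset hf).antisymm
    (orbitFinset_subset hv fun u => apply_mem_orbitFinset hf)

theorem orbitFinset_of_isFixedPt (hv : f v = v) : orbitFinset f v = {v} := by
  rw [orbitFinset, minimalPeriod_eq_one_iff_isFixedPt.2 hv]
  rfl

theorem apply_ne_of_mem_orbitFinset [Finite V] (hf : Injective f) (h : w ∈ orbitFinset f v)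
    (hv : f v ≠ v) : f w ≠ w := fun hw => by
  have hvw : v ∈ orbitFinset f w := orbitFinset_eq_of_mem hf h ▸ mem_orbitFinset_self hf v
  rw [orbitFinset_of_isFixedPt hw, mem_singleton] at hvw
  exact hv (hvw ▸ hw)

theorem transGen_of_forall_mem_orbitFinset [Finite V] (hf : Injective f) {r : V → V → Prop}
    (h : ∀ u ∈ orbitFinset f v, r u (f u)) : Relation.TransGen r v v := by
  have step : ∀ k, Relation.TransGen r v (f^[k + 1] v) := by
    intro k
    induction k with
    | zero => exact .single (h v (mem_orbitFinset_self hf v))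
    | succ k ih =>
      rw [iterate_succ_apply']
      exact ih.tail (h _ (iterate_mem_orbitFinset hf v _))
  have hpos := minimalPeriod_pos_of_mem_periodicPts (hf.mem_periodicPts v)
  simpa only [Nat.sub_add_cancel hpos, iterate_minimalPeriod] using step (minimalPeriod f v - 1)

end Orbit

section Height

theorem exists_height_of_periodic {m : ℕ} (hm : 0 < m) {D : ℕ → Bool} (hD : Periodic D m)
    (hsurj : ∀ b, ∃ i, D i = b) :
    ∃ h : ℕ → ℤ, Periodic h m ∧
      ∀ i, (D i = true → h i < h (i + 1)) ∧ (D i = false → h (i + 1) < h i) := by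
  have card_pos : ∀ b, 0 < #{i ∈ range m | D i = b} := fun b => by
    obtain ⟨i, hi⟩ := hsurj b
    exact card_pos.2
      ⟨i % m, mem_filter.2 ⟨mem_range.2 (Nat.mod_lt i hm), hD.map_mod_nat i ▸ hi⟩⟩
  obtain ⟨P, hP, hPdef⟩ : ∃ P : ℤ, 0 < P ∧ P = #{i ∈ range m | D i = true} :=
    ⟨_, by exact_mod_cast card_pos true, rfl⟩
  obtain ⟨Q, hQ, hQdef⟩ : ∃ Q : ℤ, 0 < Q ∧ Q = #{i ∈ range m | D i = false} :=
    ⟨_, by exact_mod_cast card_pos false, rfl⟩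
  -- a rising step weighs `Q` and a falling one `-P`, so that the weights over a period cancel
  have period_sum : ∑ i ∈ range m, (if D i = true then Q else -P) = 0 := by
    simp only [sum_ite, sum_const, nsmul_eq_mul, Bool.not_eq_true, ← hPdef, ← hQdef]
    ring
  refine ⟨fun i => ∑ j ∈ range i, if D j = true then Q else -P, fun i => ?_, fun i => ?_⟩
  · show ∑ j ∈ range (i + m), _ = ∑ j ∈ range i, _
    rw [add_comm i m, sum_range_add, period_sum, zero_add]
    exact sum_congr rfl fun j _ => by rw [add_comm m j, hD j]
  · simp only [sum_range_succ]
    constructor <;> intro hi <;> simp only [hi, if_true, if_false, Bool.false_eq_true] <;> omega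

variable {V : Type*} [Finite V] {f : V → V} {v : V}

theorem exists_height_on_orbitFinset [DecidableEq V] (hf : Injective f) (D : V → Bool)
    (hD : ∃ u ∈ orbitFinset f v, ∃ u' ∈ orbitFinset f v, D u ≠ D u') :
    ∃ h : V → ℤ, ∀ u ∈ orbitFinset f v,
      (D u = true → h u < h (f u)) ∧ (D u = false → h (f u) < h u) := by
  have hm := minimalPeriod_pos_of_mem_periodicPts (hf.mem_periodicPts v)
  obtain ⟨h, hh, hstep⟩ := exists_height_of_periodic hm (D := fun i => D (f^[i] v))
    (fun i => by simp only [iterate_add_minimalPeriod_eq]) (fun b => by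
      obtain ⟨u, hu, u', hu', hne⟩ := hD
      obtain ⟨k, rfl⟩ := (mem_orbitFinset hf).1 hu
      obtain ⟨k', rfl⟩ := (mem_orbitFinset hf).1 hu'
      by_cases hb : D (f^[k] v) = b
      · exact ⟨k, hb⟩
      · refine ⟨k', ?_⟩
        revert hne hb
        cases D (f^[k] v) <;> cases D (f^[k'] v) <;> cases b <;> simp)
  have well_defined : ∀ k k', f^[k] v = f^[k'] v → h k = h k' := fun k k' hkk' => by
    rw [← hh.map_mod_nat k, ← hh.map_mod_nat k']
    rw [← iterate_mod_minimalPeriod_eq (n := k), ← iterate_mod_minimalPeriod_eq (n := k'),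
      iterate_eq_iterate_iff_of_lt_minimalPeriod (Nat.mod_lt _ hm) (Nat.mod_lt _ hm)] at hkk'
    rw [hkk']
  refine ⟨h ∘ invFun (f^[·] v), fun u hu => ?_⟩
  obtain ⟨k, rfl⟩ := (mem_orbitFinset hf).1 hu
  have index : ∀ j, h (invFun (f^[·] v) (f^[j] v)) = h j :=
    fun j => well_defined _ _ (invFun_eq (f := (f^[·] v)) ⟨j, rfl⟩)
  simp only [comp_apply, ← iterate_succ_apply' f, index]
  exact hstep k

end Height

section Gluing

variable {ι V : Type*}

def IsTreelike (T : ι → Finset V) : List ι → Prop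
  | [] => True
  | i :: L =>
    (∀ x ∈ T i, ∀ y ∈ T i,
      (∃ j ∈ L, x ∈ T j) → (∃ j ∈ L, y ∈ T j) → x = y) ∧ IsTreelike T L

theorem IsTreelike.exists_height {T : ι → Finset V} {L : List ι} (hL : IsTreelike T L)
    (R : ι → V → V → Prop) (hR : ∀ i ∈ L, ∀ u w, R i u w → u ∈ T i ∧ w ∈ T i)
    (hloc : ∀ i ∈ L, ∃ h : V → ℤ, ∀ u w, R i u w → h u < h w) :
    ∃ h : V → ℤ, ∀ i ∈ L, ∀ u w, R i u w → h u < h w := by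
  classical
  induction L with
  | nil => exact ⟨0, by simp⟩
  | cons i L ih =>
    obtain ⟨hi, hL⟩ := hL
    obtain ⟨f, hf⟩ := ih hL (fun j hj => hR j (.tail _ hj)) (fun j hj => hloc j (.tail _ hj))
    obtain ⟨h, hh⟩ := hloc i (.head _)
    obtain ⟨c, hc⟩ :
        ∃ c : ℤ, ∀ x ∈ T i, (∃ j ∈ L, x ∈ T j) → h x + c = f x := by
      by_cases hshared : ∃ x ∈ T i, ∃ j ∈ L, x ∈ T j
      · obtain ⟨x, hx, hxL⟩ := hshared
        exact ⟨f x - h x, fun y hy hyL => by rw [hi y hy x hx hyL hxL]; ring⟩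
      · exact ⟨0, fun x hx hxL => absurd ⟨x, hx, hxL⟩ hshared⟩
    refine ⟨fun x => if x ∈ T i then h x + c else f x, fun j hj u w huw => ?_⟩
    rcases List.mem_cons.1 hj with rfl | hj
    · obtain ⟨hu, hw⟩ := hR j (.head _) u w huw
      simp only [if_pos hu, if_pos hw]
      linarith [hh u w huw]
    · have agree : ∀ x ∈ T j, (if x ∈ T i then h x + c else f x) = f x := fun x hx => by
        split_ifs with hxi
        · exact hc x hxi ⟨j, hj, hx⟩
        · rfl
      obtain ⟨hu, hw⟩ := hR j (.tail _ hj) u w huw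
      dsimp only
      rw [agree u hu, agree w hw]
      exact hf j hj u w huw

theorem IsTreelike.append {T : ι → Finset V} {M L : List ι}
    (hM : ∀ i ∈ M, (T i : Set V).Subsingleton) (hL : IsTreelike T L) :
    IsTreelike T (M ++ L) := by
  induction M with
  | nil => exact hL
  | cons i M ih =>
    exact ⟨fun x hx y hy _ _ => hM i (.head _) hx hy, ih fun j hj => hM j (.tail _ hj)⟩

end Gluing

section LooplessSchreier

variable {ι V : Type} [Fintype ι] [DecidableEq ι] [Fintype V] [DecidableEq V]

def looplessSchreier (g : ι → V → V) : Multigraph V where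
  Edge := {e : ι × V // g e.1 e.2 ≠ e.2}
  fintypeEdge := inferInstance
  decEqEdge := inferInstance
  inc e := s(e.1.2, g e.1.1 e.1.2)

variable {g : ι → V → V}

def orient (g : ι → V → V) (d : (looplessSchreier g).Edge → Bool)
    (e : (looplessSchreier g).Edge) : V × V :=
  if d e then (e.1.2, g e.1.1 e.1.2) else (g e.1.1 e.1.2, e.1.2)

def HasNoDirectedCycle {E : Type*} (σ : E → V × V) : Prop :=
  ∀ v, ¬ Relation.TransGen (fun u w => ∃ e, σ e = (u, w)) v v

theorem isOrientation_orient (d : (looplessSchreier g).Edge → Bool) :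
    (looplessSchreier g).IsOrientation (orient g d) := fun e => by
  unfold orient
  split_ifs
  · rfl
  · exact Sym2.eq_swap

theorem orient_decide {σ : (looplessSchreier g).Edge → V × V}
    (hσ : (looplessSchreier g).IsOrientation σ) :
    orient g (fun e => decide ((σ e).1 = e.1.2)) = σ := funext fun e => by
  have h : s((σ e).1, (σ e).2) = s(e.1.2, g e.1.1 e.1.2) := hσ e
  rcases Sym2.eq_iff.1 h with ⟨h1, h2⟩ | ⟨h1, h2⟩
  · simp [orient, h1, Prod.ext_iff, h2]
  · simp [orient, h1, e.2, Prod.ext_iff, h2]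

def orientationEquiv :
    {σ : (looplessSchreier g).Edge → V × V // (looplessSchreier g).IsOrientation σ} ≃
      ((looplessSchreier g).Edge → Bool) where
  toFun σ e := decide ((σ.1 e).1 = e.1.2)
  invFun d := ⟨orient g d, isOrientation_orient d⟩
  left_inv σ := Subtype.ext (orient_decide σ.2)
  right_inv d := funext fun e => by by_cases hd : d e <;> simp [orient, hd, e.2]

theorem acyclicOrientationCount_looplessSchreier_eq_card :
    (looplessSchreier g).acyclicOrientationCount =
      Nat.card {d // HasNoDirectedCycle (orient g d)} :=
  Nat.card_congr <| (Equiv.subtypeSubtypeEquivSubtypeInter _ _).symm.trans <|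
    orientationEquiv.subtypeEquiv fun σ => by
      rw [← orient_decide σ.2]
      rfl

end LooplessSchreier

section Transversal

variable {ι V : Type} [DecidableEq V] {g : ι → V → V} {L : List (ι × V)}

noncomputable abbrev taggedOrbit (g : ι → V → V) (p : ι × V) : Finset V :=
  orbitFinset (g p.1) p.2

structure IsOrbitTransversal (g : ι → V → V) (L : List (ι × V)) : Prop where
  exists_mem : ∀ t v, ∃ p ∈ L, p.1 = t ∧ v ∈ taggedOrbit g p
  pairwise_disjoint : L.Pairwise fun p q =>
    p.1 = q.1 → Disjoint (taggedOrbit g p) (taggedOrbit g q)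

namespace IsOrbitTransversal

theorem eq_of_mem_taggedOrbit (hL : IsOrbitTransversal g L) {p q : ι × V} (hp : p ∈ L)
    (hq : q ∈ L) (hpq : p.1 = q.1) {v : V}
    (hvp : v ∈ taggedOrbit g p) (hvq : v ∈ taggedOrbit g q) : p = q := by
  by_contra hne
  have : Std.Symm fun p q : ι × V =>
      p.1 = q.1 → Disjoint (taggedOrbit g p) (taggedOrbit g q) :=
    ⟨fun _ _ h hba => (h hba.symm).symm⟩
  exact disjoint_left.1 (hL.pairwise_disjoint.forall hp hq hne hpq) hvp hvq

theorem nodup [Finite V] (hL : IsOrbitTransversal g L) (hg : ∀ t, Injective (g t)) : L.Nodup :=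
  hL.pairwise_disjoint.imp fun {p _} h hpq => by
    subst hpq
    exact disjoint_left.1 (h rfl) (mem_orbitFinset_self (hg p.1) p.2)
      (mem_orbitFinset_self (hg p.1) p.2)

noncomputable def rep (hL : IsOrbitTransversal g L) (x : ι × V) : ι × V :=
  (hL.exists_mem x.1 x.2).choose

theorem rep_mem (hL : IsOrbitTransversal g L) (x : ι × V) : hL.rep x ∈ L :=
  (hL.exists_mem x.1 x.2).choose_spec.1

theorem rep_fst (hL : IsOrbitTransversal g L) (x : ι × V) : (hL.rep x).1 = x.1 :=
  (hL.exists_mem x.1 x.2).choose_spec.2.1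

theorem mem_taggedOrbit_rep (hL : IsOrbitTransversal g L) (x : ι × V) :
    x.2 ∈ taggedOrbit g (hL.rep x) :=
  (hL.exists_mem x.1 x.2).choose_spec.2.2

theorem rep_eq (hL : IsOrbitTransversal g L) {x p : ι × V} (hp : p ∈ L) (hpx : p.1 = x.1)
    (hx : x.2 ∈ taggedOrbit g p) : hL.rep x = p :=
  hL.eq_of_mem_taggedOrbit (hL.rep_mem x) hp ((hL.rep_fst x).trans hpx.symm)
    (hL.mem_taggedOrbit_rep x) hx

theorem rep_eq_rep_iff [Finite V] (hL : IsOrbitTransversal g L) (hg : ∀ t, Injective (g t))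
    {x y : ι × V} :
    hL.rep y = hL.rep x ↔ y.1 = x.1 ∧ y.2 ∈ taggedOrbit g x := by
  have horb : taggedOrbit g x = taggedOrbit g (hL.rep x) := by
    rw [taggedOrbit, ← hL.rep_fst x]
    exact orbitFinset_eq_of_mem (hg _) (hL.mem_taggedOrbit_rep x)
  rw [horb]
  refine ⟨fun h => ⟨(hL.rep_fst y).symm.trans (h ▸ hL.rep_fst x),
    h ▸ hL.mem_taggedOrbit_rep y⟩,
    fun ⟨hyx, hy⟩ => hL.rep_eq (hL.rep_mem x) (by rw [hL.rep_fst, hyx]) hy⟩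

end IsOrbitTransversal

/-- The number of acyclic orientations of a cycle of length `m`; an orbit of length `1` carries
no edge once its loop is deleted. -/
def acyclicCycleCount (m : ℕ) : ℕ := if m = 1 then 1 else 2 ^ m - 2

end Transversal

section CoherentCycles

variable {ι V : Type} [Fintype ι] [DecidableEq ι] [Fintype V] [DecidableEq V]
  {g : ι → V → V}

/-- The cycles of `looplessSchreier g` are the nontrivial orbits of the maps `g t`; `d` orients
none of them coherently. -/
def NoCoherentCycle (g : ι → V → V) (d : (looplessSchreier g).Edge → Bool) : Prop :=
  ∀ e : (looplessSchreier g).Edge, ∃ e' : (looplessSchreier g).Edge,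
    e'.1.1 = e.1.1 ∧ e'.1.2 ∈ taggedOrbit g e.1 ∧ d e' ≠ d e

theorem noCoherentCycle_of_hasNoDirectedCycle (hg : ∀ t, Injective (g t))
    {d : (looplessSchreier g).Edge → Bool} (hd : HasNoDirectedCycle (orient g d)) :
    NoCoherentCycle g d := by
  intro ⟨⟨t, v⟩, hv⟩
  by_contra! hcoh
  have edge_at : ∀ u ∈ orbitFinset (g t) v,
      ∃ hu : g t u ≠ u, d ⟨(t, u), hu⟩ = d ⟨(t, v), hv⟩ := fun u hu =>
    ⟨apply_ne_of_mem_orbitFinset (hg t) hu hv, hcoh _ rfl hu⟩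
  apply hd v
  cases hdv : d ⟨(t, v), hv⟩
  · refine Relation.transGen_swap.1 (transGen_of_forall_mem_orbitFinset (hg t) fun u hu => ?_)
    obtain ⟨hu', hde⟩ := edge_at u hu
    exact ⟨⟨(t, u), hu'⟩, by simp [orient, hde, hdv]⟩
  · refine transGen_of_forall_mem_orbitFinset (hg t) fun u hu => ?_
    obtain ⟨hu', hde⟩ := edge_at u hu
    exact ⟨⟨(t, u), hu'⟩, by simp [orient, hde, hdv]⟩

theorem orient_mem_taggedOrbit (hg : ∀ t, Injective (g t))
    (d : (looplessSchreier g).Edge → Bool) {e : (looplessSchreier g).Edge} {p : ι × V}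
    (hep : e.1.1 = p.1) (he : e.1.2 ∈ taggedOrbit g p) :
    (orient g d e).1 ∈ taggedOrbit g p ∧ (orient g d e).2 ∈ taggedOrbit g p := by
  obtain ⟨⟨t, x⟩, hx⟩ := e
  obtain ⟨t', v⟩ := p
  obtain rfl : t = t' := hep
  have hgx := apply_mem_orbitFinset (hg t) he
  unfold orient
  split_ifs
  exacts [⟨he, hgx⟩, ⟨hgx, he⟩]

theorem exists_height_orient (hg : ∀ t, Injective (g t)) {d : (looplessSchreier g).Edge → Bool}
    (hd : NoCoherentCycle g d) (p : ι × V) :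
    ∃ h : V → ℤ, ∀ e : (looplessSchreier g).Edge,
      e.1.1 = p.1 → e.1.2 ∈ taggedOrbit g p →
      h (orient g d e).1 < h (orient g d e).2 := by
  obtain ⟨t, v₀⟩ := p
  by_cases hp : ∃ e : (looplessSchreier g).Edge, e.1.1 = t ∧ e.1.2 ∈ orbitFinset (g t) v₀
  swap
  · exact ⟨0, fun e he hep => absurd ⟨e, he, hep⟩ hp⟩
  obtain ⟨⟨⟨t', v⟩, hv⟩, ht', hvp⟩ := hp
  obtain rfl : t = t' := ht'.symm
  let D (u : V) : Bool := if hu : g t u ≠ u then d ⟨(t, u), hu⟩ else true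
  obtain ⟨⟨⟨t'', x'⟩, hx'⟩, ht'', hx'v, hne⟩ := hd ⟨(t, v), hv⟩
  obtain rfl : t = t'' := ht''.symm
  obtain ⟨h, hh⟩ := exists_height_on_orbitFinset (hg t) D
    ⟨x', hx'v, v, mem_orbitFinset_self (hg t) v, by simpa [D, hx', hv] using hne⟩
  refine ⟨h, fun ⟨⟨t₁, x⟩, hx⟩ ht₁ hxv₀ => ?_⟩
  obtain rfl : t = t₁ := ht₁.symm
  have hxv : x ∈ orbitFinset (g t) v := orbitFinset_eq_of_mem (hg t) hvp ▸ hxv₀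
  have hDx : D x = d ⟨(t, x), hx⟩ := dif_pos hx
  unfold orient
  split_ifs with hdx
  · exact (hh x hxv).1 (hDx.trans hdx)
  · exact (hh x hxv).2 (hDx.trans (by simpa using hdx))

theorem hasNoDirectedCycle_orient (hg : ∀ t, Injective (g t)) {L : List (ι × V)}
    (hcover : ∀ t v, ∃ p ∈ L, p.1 = t ∧ v ∈ taggedOrbit g p)
    (htree : IsTreelike (taggedOrbit g) L)
    {d : (looplessSchreier g).Edge → Bool} (hd : NoCoherentCycle g d) :
    HasNoDirectedCycle (orient g d) := by
  let R (p : ι × V) (u w : V) : Prop := ∃ e : (looplessSchreier g).Edge,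
    e.1.1 = p.1 ∧ e.1.2 ∈ taggedOrbit g p ∧ orient g d e = (u, w)
  obtain ⟨h, hh⟩ := htree.exists_height R
    (fun _ _ u w ⟨e, hep, he, heuw⟩ => by simpa [heuw] using orient_mem_taggedOrbit hg d hep he)
    (fun p _ => (exists_height_orient hg hd p).imp fun h hh u w ⟨e, hep, he, heuw⟩ => by
      simpa [heuw] using hh e hep he)
  have hstep : ∀ u w, (∃ e, orient g d e = (u, w)) → h u < h w := by
    rintro u w ⟨e, he⟩
    obtain ⟨p, hpL, hpt, hep⟩ := hcover e.1.1 e.1.2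
    exact hh p hpL u w ⟨e, hpt.symm, hep, he⟩
  intro v hv
  have := hv.lift h hstep
  rw [Relation.transGen_eq_self] at this
  exact lt_irrefl _ this

end CoherentCycles

theorem card_nonconst (F : Type*) [Fintype F] :
    Nat.card {d : F → Bool // ∀ x, ∃ y, d y ≠ d x} =
      if Fintype.card F = 0 then 1 else 2 ^ Fintype.card F - 2 := by
  classical
  rw [Nat.card_eq_fintype_card, Fintype.card_subtype]
  split_ifs with h
  · rw [filter_true_of_mem fun d _ x => (Fintype.card_eq_zero_iff.1 h).elim x, card_univ,
      Fintype.card_fun, h, pow_zero]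
  · have : Nonempty F := Fintype.card_pos_iff.1 (Nat.pos_of_ne_zero h)
    have hconst : ({d | ¬ ∀ x, ∃ y, d y ≠ d x} : Finset (F → Bool)) =
        univ.map ⟨const F, const_injective⟩ := by
      ext d
      simp only [mem_filter, mem_univ, true_and, mem_map, Embedding.coeFn_mk, not_forall,
        not_exists, not_not, funext_iff, const_apply]
      exact ⟨fun ⟨x, hx⟩ => ⟨d x, fun y => (hx y).symm⟩,
        fun ⟨b, hb⟩ => ⟨Classical.arbitrary F, fun y => (hb y).symm.trans (hb _)⟩⟩
    have := card_filter_add_card_filter_not (s := univ)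
      (fun d : F → Bool => ∀ x, ∃ y, d y ≠ d x)
    rw [hconst, card_map, card_univ, card_univ, Fintype.card_bool, Fintype.card_fun,
      Fintype.card_bool] at this
    omega

theorem card_nonconst_on_fibers {E κ : Type*} [Fintype E] [Fintype κ] [DecidableEq κ]
    (r : E → κ) :
    Nat.card {d : E → Bool // ∀ e, ∃ e', r e' = r e ∧ d e' ≠ d e} =
      ∏ k, if Fintype.card {e // r e = k} = 0 then 1
        else 2 ^ Fintype.card {e // r e = k} - 2 := by
  let curry : (E → Bool) ≃ ∀ k, {e // r e = k} → Bool :=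
    (Equiv.arrowCongr (Equiv.sigmaFiberEquiv r).symm (Equiv.refl Bool)).trans
      (Equiv.piCurry fun _ _ => Bool)
  have fiberwise : ∀ d : E → Bool, (∀ e, ∃ e', r e' = r e ∧ d e' ≠ d e) ↔
      ∀ k (x : {e // r e = k}), ∃ y : {e // r e = k}, d y ≠ d x := fun d => by
    refine ⟨fun h k x => ?_, fun h e => ?_⟩
    · obtain ⟨e', he', hne⟩ := h x.1
      exact ⟨⟨e', he'.trans x.2⟩, hne⟩
    · obtain ⟨y, hy⟩ := h (r e) ⟨e, rfl⟩
      exact ⟨y.1, y.2, hy⟩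
  have e : {d : E → Bool // ∀ e, ∃ e', r e' = r e ∧ d e' ≠ d e} ≃
      ∀ k, {D : {e // r e = k} → Bool // ∀ x, ∃ y, D y ≠ D x} :=
    (curry.subtypeEquiv fiberwise).trans Equiv.subtypePiEquivPi
  rw [Nat.card_congr e, Nat.card_pi]
  exact prod_congr rfl fun k _ => card_nonconst _

section Count

variable {ι V : Type} [Fintype ι] [DecidableEq ι] [Fintype V] [DecidableEq V]
  {g : ι → V → V}
  {L : List (ι × V)}

theorem IsOrbitTransversal.card_fiber_rep (hL : IsOrbitTransversal g L)
    (hg : ∀ t, Injective (g t)) {p : ι × V} (hp : p ∈ L) :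
    Fintype.card {e : (looplessSchreier g).Edge // hL.rep e.1 = p} =
      if g p.1 p.2 = p.2 then 0 else #(taggedOrbit g p) := by
  split_ifs with hfix
  · refine Fintype.card_eq_zero_iff.2 ⟨fun ⟨⟨⟨t, x⟩, hx⟩, he⟩ => hx ?_⟩
    have hxp : x ∈ orbitFinset (g p.1) p.2 := he ▸ hL.mem_taggedOrbit_rep (t, x)
    obtain rfl : t = p.1 := (he ▸ hL.rep_fst (t, x)).symm
    rw [orbitFinset_of_isFixedPt hfix, mem_singleton] at hxp
    rwa [hxp]
  · rw [← Fintype.card_coe]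
    exact Fintype.card_congr
      { toFun e := ⟨e.1.1.2, by simpa only [e.2] using hL.mem_taggedOrbit_rep e.1.1⟩
        invFun u := ⟨⟨(p.1, u), apply_ne_of_mem_orbitFinset (hg _) u.2 hfix⟩,
          hL.rep_eq hp rfl u.2⟩
        left_inv := fun ⟨e, he⟩ => Subtype.ext <| Subtype.ext <|
          Prod.ext (he ▸ hL.rep_fst e.1) rfl
        right_inv := fun _ => rfl }

theorem IsOrbitTransversal.card_noCoherentCycle (hL : IsOrbitTransversal g L)
    (hg : ∀ t, Injective (g t)) :
    Nat.card {d // NoCoherentCycle g d} =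
      (L.map fun p => acyclicCycleCount #(taggedOrbit g p)).prod := by
  have hcard : Nat.card {d // NoCoherentCycle g d} =
      Nat.card {d : (looplessSchreier g).Edge → Bool //
        ∀ e, ∃ e', hL.rep e'.1 = hL.rep e.1 ∧ d e' ≠ d e} :=
    Nat.card_congr <| Equiv.subtypeEquivRight fun d => by
      simp only [NoCoherentCycle, hL.rep_eq_rep_iff hg, and_assoc]
  rw [hcard, card_nonconst_on_fibers, ← prod_subset (subset_univ L.toFinset),
    List.prod_toFinset _ (hL.nodup hg)]
  · refine congrArg List.prod (List.map_congr_left fun p hp => ?_)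
    rw [hL.card_fiber_rep hg hp]
    by_cases hfix : g p.1 p.2 = p.2
    · rw [if_pos hfix, if_pos rfl, taggedOrbit, orbitFinset_of_isFixedPt hfix, card_singleton]
      rfl
    · have two_le : 2 ≤ #(taggedOrbit g p) := one_lt_card.2
        ⟨_, mem_orbitFinset_self (hg _) _, _, apply_mem_orbitFinset (hg _)
          (mem_orbitFinset_self (hg _) _), Ne.symm hfix⟩
      rw [if_neg hfix, acyclicCycleCount, if_neg (by omega), if_neg (by omega)]
  · intro k _ hk
    have : IsEmpty {e : (looplessSchreier g).Edge // hL.rep e.1 = k} :=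
      ⟨fun ⟨e, he⟩ => hk (he ▸ List.mem_toFinset.2 (hL.rep_mem e.1))⟩
    rw [Fintype.card_eq_zero, if_pos rfl]

theorem acyclicOrientationCount_looplessSchreier (hg : ∀ t, Injective (g t))
    (hL : IsOrbitTransversal g L) (htree : IsTreelike (taggedOrbit g) L) :
    (looplessSchreier g).acyclicOrientationCount =
      (L.map fun p => acyclicCycleCount #(taggedOrbit g p)).prod := by
  rw [acyclicOrientationCount_looplessSchreier_eq_card, ← hL.card_noCoherentCycle hg]
  exact Nat.card_congr <| Equiv.subtypeEquivRight fun d =>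
    ⟨noCoherentCycle_of_hasNoDirectedCycle hg, hasNoDirectedCycle_orient hg hL.exists_mem htree⟩

end Count

section BasilicaOrbits

variable {n : ℕ}

@[simp] theorem basA_cons_true (w : Fin n → Bool) :
    basA (n + 1) (Fin.cons true w) = Fin.cons true w := by
  simp [basA]

@[simp] theorem basA_cons_false (w : Fin n → Bool) :
    basA (n + 1) (Fin.cons false w) = Fin.cons false (basB n w) := by
  simp [basA]

@[simp] theorem basB_cons_true (w : Fin n → Bool) :
    basB (n + 1) (Fin.cons true w) = Fin.cons false w := by
  simp [basB]

@[simp] theorem basB_cons_false (w : Fin n → Bool) :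
    basB (n + 1) (Fin.cons false w) = Fin.cons true (basA n w) := by
  simp [basB]

theorem basA_injective_and_basB_injective : ∀ n, Injective (basA n) ∧ Injective (basB n)
  | 0 => ⟨fun _ _ h => h, fun _ _ h => h⟩
  | n + 1 => by
    obtain ⟨hA, hB⟩ := basA_injective_and_basB_injective n
    constructor <;> intro v w h <;> induction v using Fin.consCases <;>
      induction w using Fin.consCases <;> rename_i x v y w <;> cases x <;> cases y <;>
      simp_all [Fin.cons_inj, hA.eq_iff, hB.eq_iff]

theorem basA_injective (n : ℕ) : Injective (basA n) := (basA_injective_and_basB_injective n).1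

theorem basB_injective (n : ℕ) : Injective (basB n) := (basA_injective_and_basB_injective n).2

theorem basGen_injective (n : ℕ) : ∀ t, Injective (basGen n t)
  | true => basA_injective n
  | false => basB_injective n

theorem basA_iterate_cons_false (k : ℕ) (w : Fin n → Bool) :
    (basA (n + 1))^[k] (Fin.cons false w) = Fin.cons false ((basB n)^[k] w) := by
  induction k with
  | zero => rfl
  | succ k ih => rw [iterate_succ_apply', ih, basA_cons_false, iterate_succ_apply']

theorem basB_iterate_two_mul_cons (k : ℕ) (x : Bool) (w : Fin n → Bool) :
    (basB (n + 1))^[2 * k] (Fin.cons x w) = Fin.cons x ((basA n)^[k] w) := by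
  induction k generalizing w with
  | zero => rfl
  | succ k ih =>
    rw [Nat.mul_succ, iterate_add_apply, iterate_succ_apply, ← iterate_succ_apply]
    cases x <;> simp [ih]

def prefixed (s : Finset Bool) (t : Finset (Fin n → Bool)) : Finset (Fin (n + 1) → Bool) :=
  (s ×ˢ t).map (Fin.consEquiv fun _ => Bool).toEmbedding

theorem mem_prefixed {s : Finset Bool} {t : Finset (Fin n → Bool)} {v : Fin (n + 1) → Bool} :
    v ∈ prefixed s t ↔ v 0 ∈ s ∧ Fin.tail v ∈ t := by
  simp [prefixed, mem_map_equiv]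

theorem card_prefixed (s : Finset Bool) (t : Finset (Fin n → Bool)) :
    #(prefixed s t) = #s * #t := by
  simp [prefixed]

theorem orbitFinset_basA_cons_true (w : Fin n → Bool) :
    orbitFinset (basA (n + 1)) (Fin.cons true w) = {Fin.cons true w} :=
  orbitFinset_of_isFixedPt (basA_cons_true w)

theorem orbitFinset_basA_cons_false (w : Fin n → Bool) :
    orbitFinset (basA (n + 1)) (Fin.cons false w) = prefixed {false} (orbitFinset (basB n) w) := by
  ext v
  induction v using Fin.consCases with | cons x u => ?_
  simp only [mem_orbitFinset (basA_injective _), mem_prefixed, mem_orbitFinset (basB_injective _),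
    basA_iterate_cons_false, Fin.cons_inj, mem_singleton, Fin.cons_zero, Fin.tail_cons]
  tauto

theorem orbitFinset_basB_cons (x : Bool) (w : Fin n → Bool) :
    orbitFinset (basB (n + 1)) (Fin.cons x w) = prefixed univ (orbitFinset (basA n) w) := by
  have hB := basB_injective (n + 1)
  have same_orbit : ∀ y, orbitFinset (basB (n + 1)) (Fin.cons y w) =
      orbitFinset (basB (n + 1)) (Fin.cons true w) := fun y => by
    cases y
    · exact orbitFinset_eq_of_mem hB (basB_cons_true w ▸ apply_mem_orbitFinset hB
        (mem_orbitFinset_self hB _))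
    · rfl
  refine (orbitFinset_subset ?_ fun v hv => ?_).antisymm fun v hv => ?_
  · simpa [mem_prefixed] using mem_orbitFinset_self (basA_injective n) w
  · induction v using Fin.consCases with | cons y u => ?_
    have hu := (mem_prefixed.1 hv).2
    simp only [Fin.tail_cons] at hu
    cases y <;> simp [mem_prefixed, hu, apply_mem_orbitFinset (basA_injective n) hu]
  · induction v using Fin.consCases with | cons y u => ?_
    obtain ⟨k, rfl⟩ := (mem_orbitFinset (basA_injective n)).1 (by simpa [mem_prefixed] using hv)
    rw [same_orbit x, ← same_orbit y, ← basB_iterate_two_mul_cons]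
    exact iterate_mem_orbitFinset hB _ _

end BasilicaOrbits

section BasilicaOrbitReps

variable {n : ℕ}

def liftEntry (p : Bool × (Fin n → Bool)) : Bool × (Fin (n + 1) → Bool) :=
  (!p.1, Fin.cons false p.2)

/-- One point of every orbit of each generator on level `n`, tagged by the generator (`true` for
`a`). On level `n + 1` the words `1w` are fixed by `a`; every other orbit comes from an orbit one
level down via `liftEntry`. -/
noncomputable def basilicaOrbitReps : (n : ℕ) → List (Bool × (Fin n → Bool))
  | 0 => [(true, ![]), (false, ![])]
  | n + 1 =>
    (univ.toList.map fun w => (true, Fin.cons true w)) ++ (basilicaOrbitReps n).map liftEntry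

theorem taggedOrbit_liftEntry (p : Bool × (Fin n → Bool)) :
    taggedOrbit (basGen (n + 1)) (liftEntry p) =
      prefixed (if p.1 then univ else {false}) (taggedOrbit (basGen n) p) := by
  obtain ⟨_ | _, w⟩ := p
  · exact orbitFinset_basA_cons_false w
  · exact orbitFinset_basB_cons false w

theorem mem_taggedOrbit_liftEntry {p : Bool × (Fin n → Bool)} {v : Fin (n + 1) → Bool} :
    v ∈ taggedOrbit (basGen (n + 1)) (liftEntry p) ↔
      (p.1 = false → v 0 = false) ∧ Fin.tail v ∈ taggedOrbit (basGen n) p := by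
  rw [taggedOrbit_liftEntry, mem_prefixed]
  cases p.1 <;> simp

theorem card_taggedOrbit_liftEntry (p : Bool × (Fin n → Bool)) :
    #(taggedOrbit (basGen (n + 1)) (liftEntry p)) =
      (if p.1 then 2 else 1) * #(taggedOrbit (basGen n) p) := by
  rw [taggedOrbit_liftEntry, card_prefixed]
  cases p.1 <;> rfl

theorem taggedOrbit_cons_true (w : Fin n → Bool) :
    taggedOrbit (basGen (n + 1)) (true, Fin.cons true w) = {Fin.cons true w} :=
  orbitFinset_basA_cons_true w

theorem eq_false_of_mem_taggedOrbit_liftEntry {p q : Bool × (Fin n → Bool)}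
    (hpq : p.1 = q.1 → Disjoint (taggedOrbit (basGen n) p) (taggedOrbit (basGen n) q))
    {v : Fin (n + 1) → Bool} (hp : v ∈ taggedOrbit (basGen (n + 1)) (liftEntry p))
    (hq : v ∈ taggedOrbit (basGen (n + 1)) (liftEntry q)) :
    v 0 = false ∧ Fin.tail v ∈ taggedOrbit (basGen n) p ∧
      Fin.tail v ∈ taggedOrbit (basGen n) q := by
  rw [mem_taggedOrbit_liftEntry] at hp hq
  refine ⟨?_, hp.2, hq.2⟩
  cases hp1 : p.1
  · exact hp.1 hp1
  cases hq1 : q.1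
  · exact hq.1 hq1
  exact absurd hq.2 (disjoint_left.1 (hpq (hp1.trans hq1.symm)) hp.2)

theorem isOrbitTransversal_basilicaOrbitReps :
    ∀ n, IsOrbitTransversal (basGen n) (basilicaOrbitReps n)
  | 0 => ⟨fun t v => ⟨(t, ![]), by cases t <;> simp [basilicaOrbitReps],
      rfl, Subsingleton.elim ![] v ▸ mem_orbitFinset_self (basGen_injective 0 t) _⟩,
    by simp [basilicaOrbitReps]⟩
  | n + 1 => by
    obtain ⟨hcover, hdisj⟩ := isOrbitTransversal_basilicaOrbitReps n
    refine ⟨fun t v => ?_, ?_⟩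
    · induction v using Fin.consCases with | cons x u => ?_
      have lift_mem : ∀ p ∈ basilicaOrbitReps n, liftEntry p ∈ basilicaOrbitReps (n + 1) :=
        fun p hp => List.mem_append_right _ (List.mem_map_of_mem hp)
      cases t
      · obtain ⟨p, hp, hpt, hu⟩ := hcover true u
        exact ⟨liftEntry p, lift_mem p hp, by simp [liftEntry, hpt],
          mem_taggedOrbit_liftEntry.2 (by simpa [hpt] using hu)⟩
      cases x
      · obtain ⟨p, hp, hpt, hu⟩ := hcover false u
        exact ⟨liftEntry p, lift_mem p hp, by simp [liftEntry, hpt],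
          mem_taggedOrbit_liftEntry.2 (by simpa using hu)⟩
      · refine ⟨(true, Fin.cons true u), List.mem_append_left _ ?_, rfl, ?_⟩
        · simp
        · rw [taggedOrbit_cons_true]
          exact mem_singleton_self _
    refine List.pairwise_append.2 ⟨?_, ?_, ?_⟩
    · refine List.pairwise_map.2 ((nodup_toList univ).imp fun {w w'} hne _ => ?_)
      rw [taggedOrbit_cons_true, taggedOrbit_cons_true, disjoint_singleton]
      exact fun h => hne (Fin.cons_right_injective _ h)
    · refine List.pairwise_map.2 (hdisj.imp fun {p q} hpq htag =>
        disjoint_left.2 fun v hp hq => ?_)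
      have ⟨_, hvp, hvq⟩ := eq_false_of_mem_taggedOrbit_liftEntry hpq hp hq
      exact disjoint_left.1 (hpq (Bool.not_inj htag)) hvp hvq
    · simp only [List.mem_map, mem_toList, mem_univ, true_and]
      rintro _ ⟨w, rfl⟩ _ ⟨q, -, rfl⟩ htag
      rw [taggedOrbit_cons_true, disjoint_singleton_left, mem_taggedOrbit_liftEntry]
      simp_all [liftEntry]

theorem IsTreelike.map_liftEntry {L : List (Bool × (Fin n → Bool))}
    (hdisj : L.Pairwise fun p q =>
      p.1 = q.1 → Disjoint (taggedOrbit (basGen n) p) (taggedOrbit (basGen n) q))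
    (hL : IsTreelike (taggedOrbit (basGen n)) L) :
    IsTreelike (taggedOrbit (basGen (n + 1))) (L.map liftEntry) := by
  induction L with
  | nil => trivial
  | cons p L ih =>
    obtain ⟨hpL, hdisj⟩ := List.pairwise_cons.1 hdisj
    refine ⟨fun x hx y hy ⟨_, hj, hxj⟩ ⟨_, hj', hyj'⟩ => ?_, ih hdisj hL.2⟩
    obtain ⟨q, hq, rfl⟩ := List.mem_map.1 hj
    obtain ⟨q', hq', rfl⟩ := List.mem_map.1 hj'
    obtain ⟨hx0, hxp, hxq⟩ := eq_false_of_mem_taggedOrbit_liftEntry (hpL q hq) hx hxj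
    obtain ⟨hy0, hyp, hyq'⟩ := eq_false_of_mem_taggedOrbit_liftEntry (hpL q' hq') hy hyj'
    rw [← Fin.cons_self_tail x, ← Fin.cons_self_tail y, hx0, hy0,
      hL.1 _ hxp _ hyp ⟨q, hq, hxq⟩ ⟨q', hq', hyq'⟩]

theorem isTreelike_basilicaOrbitReps :
    ∀ n, IsTreelike (taggedOrbit (basGen n)) (basilicaOrbitReps n)
  | 0 => ⟨fun x _ y _ _ _ => Subsingleton.elim x y, fun x _ y _ _ _ => Subsingleton.elim x y,
      trivial⟩
  | n + 1 => by
    refine IsTreelike.append ?_ ((isTreelike_basilicaOrbitReps n).map_liftEntry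
      (isOrbitTransversal_basilicaOrbitReps n).pairwise_disjoint)
    simp only [List.mem_map, mem_toList, mem_univ, true_and]
    rintro _ ⟨w, rfl⟩
    rw [taggedOrbit_cons_true, coe_singleton]
    exact Set.subsingleton_singleton

end BasilicaOrbitReps

/-- The two generators get separate weights because passing to the next level swaps their
roles (see `orbitLengthProduct_succ`). -/
noncomputable def orbitLengthProduct (n : ℕ) (f g : ℕ → ℕ) : ℕ :=
  ((basilicaOrbitReps n).map fun p => (if p.1 then f else g) #(taggedOrbit (basGen n) p)).prod

theorem orbitLengthProduct_zero (f g : ℕ → ℕ) : orbitLengthProduct 0 f g = f 1 * g 1 := by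
  have fixed : ∀ t, taggedOrbit (basGen 0) (t, ![]) = {![]} := fun t =>
    orbitFinset_of_isFixedPt (Subsingleton.elim _ _)
  simp [orbitLengthProduct, basilicaOrbitReps, fixed]

theorem orbitLengthProduct_succ (n : ℕ) (f g : ℕ → ℕ) :
    orbitLengthProduct (n + 1) f g = f 1 ^ 2 ^ n * orbitLengthProduct n (fun m => g (2 * m)) f := by
  rw [orbitLengthProduct, basilicaOrbitReps, List.map_append, List.prod_append, List.map_map,
    List.map_map]
  congr 1
  · simp [comp_def, taggedOrbit_cons_true, List.map_const']
  · congr 1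
    refine List.map_congr_left fun ⟨t, w⟩ _ => ?_
    simp only [comp_apply, card_taggedOrbit_liftEntry]
    cases t <;> simp [liftEntry]

theorem orbitLengthProduct_add_two (n : ℕ) (h : ℕ → ℕ) :
    orbitLengthProduct (n + 2) h h =
      h 1 ^ 2 ^ (n + 1) * h 2 ^ 2 ^ n *
        orbitLengthProduct n (fun m => h (2 * m)) (fun m => h (2 * m)) := by
  rw [orbitLengthProduct_succ, orbitLengthProduct_succ, mul_assoc]

theorem orbitLengthProduct_two_mul (m : ℕ) (h : ℕ → ℕ) :
    orbitLengthProduct (2 * m) h h =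
      h (2 ^ m) ^ 2 * ∏ i ∈ range m, (h (2 ^ i) ^ 2 * h (2 ^ (i + 1))) ^ 4 ^ (m - (i + 1)) := by
  induction m generalizing h with
  | zero => simp [orbitLengthProduct_zero, sq]
  | succ m ih =>
    rw [Nat.mul_succ, orbitLengthProduct_add_two, ih, prod_range_succ']
    simp only [← pow_succ', Nat.add_sub_add_right, Nat.add_sub_cancel, pow_zero, pow_one,
      zero_add, show (4 : ℕ) ^ m = 2 ^ (2 * m) by rw [pow_mul]; norm_num]
    ring

theorem orbitLengthProduct_two_mul_add_one (m : ℕ) (h : ℕ → ℕ) :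
    orbitLengthProduct (2 * m + 1) h h = h (2 ^ m) ^ 2 * h (2 ^ (m + 1)) *
      (∏ i ∈ range m, (h (2 ^ i) ^ 2 * h (2 ^ (i + 1))) ^ 4 ^ (m - (i + 1))) ^ 2 := by
  induction m generalizing h with
  | zero =>
    simp only [Nat.mul_zero, orbitLengthProduct_succ, orbitLengthProduct_zero, pow_zero, pow_one,
      zero_add, prod_range_zero, one_pow, mul_one]
    ring
  | succ m ih =>
    rw [show 2 * (m + 1) + 1 = 2 * m + 1 + 2 by ring, orbitLengthProduct_add_two, ih,
      prod_range_succ']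
    simp only [← pow_succ', Nat.add_sub_add_right, Nat.add_sub_cancel, pow_zero, pow_one,
      zero_add, show (4 : ℕ) ^ m = 2 ^ (2 * m) by rw [pow_mul]; norm_num]
    ring

theorem prod_range_eq_prod_Icc {h : ℕ → ℕ} (h1 : h 1 = 1) (k : ℕ) :
    ∏ i ∈ range (k + 1), (h (2 ^ i) ^ 2 * h (2 ^ (i + 1))) ^ 4 ^ (k - i) =
      h (2 ^ (k + 1)) * ∏ i ∈ Icc 1 k, h (2 ^ i) ^ (3 * 2 ^ (2 * k + 1 - 2 * i)) := by
  induction k with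
  | zero => simp [h1]
  | succ k ih =>
    have hpow : ∏ i ∈ range (k + 1), (h (2 ^ i) ^ 2 * h (2 ^ (i + 1))) ^ 4 ^ (k + 1 - i) =
        (∏ i ∈ range (k + 1), (h (2 ^ i) ^ 2 * h (2 ^ (i + 1))) ^ 4 ^ (k - i)) ^ 4 := by
      rw [← prod_pow]
      refine prod_congr rfl fun i hi => ?_
      rw [← pow_mul, ← pow_succ, Nat.sub_add_comm (Nat.lt_succ_iff.1 (mem_range.1 hi))]
    rw [prod_range_succ, hpow, ih, prod_Icc_succ_top (by omega), mul_pow, ← prod_pow,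
      prod_congr rfl fun i hi => by
        rw [← pow_mul, show 3 * 2 ^ (2 * k + 1 - 2 * i) * 4 = 3 * 2 ^ (2 * (k + 1) + 1 - 2 * i) by
          rw [show 2 * (k + 1) + 1 - 2 * i = 2 * k + 1 - 2 * i + 2 by
            have := (mem_Icc.1 hi).2; omega, pow_add]
          ring]]
    simp only [Nat.sub_self, pow_zero, pow_one, show 2 * (k + 1) + 1 - 2 * (k + 1) = 1 by omega]
    ring

theorem acyclicCycleCount_two_pow {i : ℕ} (hi : 1 ≤ i) :
    acyclicCycleCount (2 ^ i) = 2 ^ 2 ^ i - 2 :=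
  if_neg (Nat.one_lt_two_pow (by omega)).ne'

theorem acyclicOrientationCount_basilicaStar_eq (n : ℕ) :
    (basilicaStar n).acyclicOrientationCount =
      orbitLengthProduct n acyclicCycleCount acyclicCycleCount := by
  simp only [orbitLengthProduct, ite_self]
  exact acyclicOrientationCount_looplessSchreier (basGen_injective n)
    (isOrbitTransversal_basilicaOrbitReps n) (isTreelike_basilicaOrbitReps n)

theorem acyclicOrientationCount_basilicaStar_two_mul_add_two (k : ℕ) :
    (basilicaStar (2 * k + 2)).acyclicOrientationCount =
      (2 ^ 2 ^ (k + 1) - 2) ^ 3 *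
        ∏ i ∈ Icc 1 k, (2 ^ 2 ^ i - 2) ^ (3 * 2 ^ (2 * k + 2 - 2 * i - 1)) := by
  rw [acyclicOrientationCount_basilicaStar_eq, show 2 * k + 2 = 2 * (k + 1) by ring,
    orbitLengthProduct_two_mul]
  simp only [Nat.add_sub_add_right]
  rw [prod_range_eq_prod_Icc rfl, acyclicCycleCount_two_pow (by omega)]
  rw [prod_congr rfl fun i hi => by
    rw [acyclicCycleCount_two_pow (mem_Icc.1 hi).1,
      show 2 * k + 1 - 2 * i = 2 * (k + 1) - 2 * i - 1 by omega]]
  ring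

theorem acyclicOrientationCount_basilicaStar_two_mul_add_three (k : ℕ) :
    (basilicaStar (2 * k + 3)).acyclicOrientationCount =
      (2 ^ 2 ^ (k + 1) - 2) ^ 4 * (2 ^ 2 ^ (k + 2) - 2) *
        ∏ i ∈ Icc 1 k, (2 ^ 2 ^ i - 2) ^ (3 * 2 ^ (2 * k + 3 - 2 * i - 1)) := by
  rw [acyclicOrientationCount_basilicaStar_eq, show 2 * k + 3 = 2 * (k + 1) + 1 by ring,
    orbitLengthProduct_two_mul_add_one]
  simp only [Nat.add_sub_add_right]
  rw [prod_range_eq_prod_Icc rfl, acyclicCycleCount_two_pow (by omega),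
    acyclicCycleCount_two_pow (by omega), mul_pow, ← prod_pow]
  rw [prod_congr rfl fun i hi => by
    rw [acyclicCycleCount_two_pow (mem_Icc.1 hi).1, ← pow_mul,
      show 3 * 2 ^ (2 * k + 1 - 2 * i) * 2 = 3 * 2 ^ (2 * (k + 1) + 1 - 2 * i - 1) by
        rw [show 2 * (k + 1) + 1 - 2 * i - 1 = 2 * k + 1 - 2 * i + 1 by
          have := (mem_Icc.1 hi).2; omega, pow_succ]
        ring]]
  ring

/-- The number of acyclic orientations of the loopless Schreier
graph `B_n*` of the Basilica group: for `n ≥ 4` odd it is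
`(2^(2^((n-1)/2)) - 2)^4 (2^(2^((n+1)/2)) - 2)
  ∏_{i=1}^{(n-1)/2-1} (2^(2^i) - 2)^(3·2^(n-2i-1))`;
for `n ≥ 4` even it is
`(2^(2^(n/2)) - 2)^3 ∏_{i=1}^{n/2-1} (2^(2^i) - 2)^(3·2^(n-2i-1))`.
Moreover, the counts for `n = 1, 2, 3` are `2`, `2³` and `2⁵·7`. -/
theorem acyclicOrientationCount_basilicaStar :
    (∀ n : ℕ, 4 ≤ n → Odd n →
      (basilicaStar n).acyclicOrientationCount =
        (2 ^ (2 ^ ((n - 1) / 2)) - 2) ^ 4 * (2 ^ (2 ^ ((n + 1) / 2)) - 2) *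
          ∏ i ∈ Finset.Icc 1 ((n - 1) / 2 - 1),
            (2 ^ (2 ^ i) - 2) ^ (3 * 2 ^ (n - 2 * i - 1))) ∧
    (∀ n : ℕ, 4 ≤ n → Even n →
      (basilicaStar n).acyclicOrientationCount =
        (2 ^ (2 ^ (n / 2)) - 2) ^ 3 *
          ∏ i ∈ Finset.Icc 1 (n / 2 - 1),
            (2 ^ (2 ^ i) - 2) ^ (3 * 2 ^ (n - 2 * i - 1))) ∧
    (basilicaStar 1).acyclicOrientationCount = 2 ∧
    (basilicaStar 2).acyclicOrientationCount = 2 ^ 3 ∧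
    (basilicaStar 3).acyclicOrientationCount = 2 ^ 5 * 7 := by
  refine ⟨fun n hn hodd => ?_, fun n hn heven => ?_, ?_,
    (acyclicOrientationCount_basilicaStar_two_mul_add_two 0).trans (by norm_num),
    (acyclicOrientationCount_basilicaStar_two_mul_add_three 0).trans (by norm_num)⟩
  · obtain ⟨k, rfl⟩ : ∃ k, n = 2 * k + 3 :=
      ⟨(n - 3) / 2, by have := Nat.odd_iff.1 hodd; omega⟩
    rw [acyclicOrientationCount_basilicaStar_two_mul_add_three,
      show (2 * k + 3 - 1) / 2 = k + 1 by omega,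
      show (2 * k + 3 + 1) / 2 = k + 2 by omega, Nat.add_sub_cancel]
  · obtain ⟨k, rfl⟩ : ∃ k, n = 2 * k + 2 :=
      ⟨(n - 2) / 2, by have := Nat.even_iff.1 heven; omega⟩
    rw [acyclicOrientationCount_basilicaStar_two_mul_add_two, show (2 * k + 2) / 2 = k + 1 by omega,
      Nat.add_sub_cancel]
  · rw [acyclicOrientationCount_basilicaStar_eq, orbitLengthProduct_succ, orbitLengthProduct_zero]
    rfl
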